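/- Gauge covariance of the magnetic Weyl quantization for linear potentials: if A and A′ = A + dχ are two smooth vector potentials for the same magnetic field B (with χ : ℝ^N → ℝ smooth), then for Schwartz symbols f the operators Op_A^ℏ(f) and Op_{A′}^ℏ(f), defined by [Op_A^ℏ(f)u](x) = ℏ^{−N} ∫∫ e^{(i/ℏ)(x−y)·k} e^{−(i/ℏ)Γ_A([x,y])} f((x+y)/2, k) u(y) dy dk, satisfy Op_{A′}^ℏ(f) = e^{(i/ℏ)χ(Q)} Op_A^ℏ(f) e^{−(i/ℏ)χ(Q)}, where Γ_A([x,y]) := ∫₀¹ A(x + t(y−x))·(y−x) dt and e^{(i/ℏ)χ(Q)} is multiplication by e^{(i/ℏ)χ(x)}. -/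

import Mathlib

open scoped BigOperators
open MeasureTheory

/-- Circulation `Γ_A([x,y]) = ∫₀¹ A(x+t(y-x))·(y-x) dt` of a vector potential
along the segment `[x,y]`. -/
noncomputable def circA {N : ℕ} (A : (Fin N → ℝ) → (Fin N → ℝ)) (x y : Fin N → ℝ) : ℝ :=
  ∫ t in (0:ℝ)..1, ∑ j, A (x + t • (y - x)) j * (y - x) j

/-- The magnetic Weyl quantization
`[Op_A^ℏ(f)u](x) = ℏ^{-N} ∫∫ e^{(i/ℏ)(x-y)·k} e^{-(i/ℏ)Γ_A([x,y])} f((x+y)/2,k) u(y) dy dk`. -/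
noncomputable def OpA {N : ℕ} (ℏ : ℝ) (A : (Fin N → ℝ) → (Fin N → ℝ))
    (f : ((Fin N → ℝ) × (Fin N → ℝ)) → ℂ) (u : (Fin N → ℝ) → ℂ)
    (x : Fin N → ℝ) : ℂ :=
  (ℏ : ℂ) ^ (-(N : ℤ)) *
    ∫ y : Fin N → ℝ, ∫ k : Fin N → ℝ,
      Complex.exp ((Complex.I / (ℏ : ℂ)) * (∑ i, (x - y) i * k i : ℝ)) *
        Complex.exp (-(Complex.I / (ℏ : ℂ)) * (circA A x y : ℝ)) *
        f ((x + y) / 2, k) * u y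



lemma circA_gauge {N : ℕ} (A : (Fin N → ℝ) → (Fin N → ℝ))
    (hA : ∀ j, ContDiff ℝ (⊤ : ℕ∞) (fun q => A q j))
    (χ : (Fin N → ℝ) → ℝ) (hχ : ContDiff ℝ (⊤ : ℕ∞) χ) (x y : Fin N → ℝ) :
    circA (fun q j => A q j + fderiv ℝ χ q (Pi.single j 1)) x y
      = circA A x y + (χ y - χ x) := by
  have hχd : Differentiable ℝ χ := hχ.differentiable (by simp)
  -- the path and its derivative
  have hpath : ∀ t : ℝ, HasDerivAt (fun s : ℝ => x + s • (y - x)) (y - x) t := by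
    intro t
    have : HasDerivAt (fun s : ℝ => s • (y - x)) ((1 : ℝ) • (y - x)) t :=
      (hasDerivAt_id t).smul_const (y - x)
    simpa using this.const_add x
  have hg : ∀ t : ℝ, HasDerivAt (fun s : ℝ => χ (x + s • (y - x)))
      (fderiv ℝ χ (x + t • (y - x)) (y - x)) t := by
    intro t
    exact ((hχd (x + t • (y - x))).hasFDerivAt).comp_hasDerivAt t (hpath t)
  -- continuity facts
  have hcontpath : Continuous fun t : ℝ => x + t • (y - x) := by continuity
  have hcont1 : Continuous fun t : ℝ => ∑ j, A (x + t • (y - x)) j * (y - x) j :=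
    continuous_finset_sum _ fun j _ =>
      (((hA j).continuous).comp hcontpath).mul continuous_const
  have hcont2 : Continuous fun t : ℝ => fderiv ℝ χ (x + t • (y - x)) (y - x) :=
    ((hχ.continuous_fderiv (by simp)).comp hcontpath).clm_apply continuous_const
  have hsum : ∀ t : ℝ,
      (∑ j, (fun q j => A q j + fderiv ℝ χ q (Pi.single j 1)) (x + t • (y - x)) j * (y - x) j)
        = (∑ j, A (x + t • (y - x)) j * (y - x) j)
          + fderiv ℝ χ (x + t • (y - x)) (y - x) := by
    intro t
    set p := x + t • (y - x)
    have hv : (y - x) = ∑ j, (y - x) j • (Pi.single j 1 : Fin N → ℝ) := by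
      ext i
      simp [Finset.sum_apply, Pi.single_apply, Finset.sum_ite_eq']
    have : fderiv ℝ χ p (y - x) = ∑ j, fderiv ℝ χ p (Pi.single j 1) * (y - x) j := by
      conv_lhs => rw [hv]
      rw [map_sum]
      refine Finset.sum_congr rfl fun j _ => ?_
      rw [(fderiv ℝ χ p).map_smul]
      simp [mul_comm, smul_eq_mul]
    rw [this, ← Finset.sum_add_distrib]
    refine Finset.sum_congr rfl fun j _ => ?_
    ring
  unfold circA
  have h2 : (∫ t in (0:ℝ)..1, fderiv ℝ χ (x + t • (y - x)) (y - x)) = χ y - χ x := by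
    have := intervalIntegral.integral_eq_sub_of_hasDerivAt
      (f := fun s : ℝ => χ (x + s • (y - x)))
      (fun t _ => hg t) (hcont2.intervalIntegrable 0 1)
    simpa using this
  calc (∫ t in (0:ℝ)..1,
        ∑ j, (fun q j => A q j + fderiv ℝ χ q (Pi.single j 1)) (x + t • (y - x)) j * (y - x) j)
      = ∫ t in (0:ℝ)..1, ((∑ j, A (x + t • (y - x)) j * (y - x) j)
          + fderiv ℝ χ (x + t • (y - x)) (y - x)) := by
        refine intervalIntegral.integral_congr fun t _ => hsum t
    _ = (∫ t in (0:ℝ)..1, ∑ j, A (x + t • (y - x)) j * (y - x) j)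
          + ∫ t in (0:ℝ)..1, fderiv ℝ χ (x + t • (y - x)) (y - x) :=
        intervalIntegral.integral_add (hcont1.intervalIntegrable 0 1)
          (hcont2.intervalIntegrable 0 1)
    _ = _ := by rw [h2]

theorem magnetic_weyl_gauge_covariance (N : ℕ)
    (A : (Fin N → ℝ) → (Fin N → ℝ)) (hA : ∀ j, ContDiff ℝ (⊤ : ℕ∞) (fun q => A q j))
    (χ : (Fin N → ℝ) → ℝ) (hχ : ContDiff ℝ (⊤ : ℕ∞) χ)
    (f : SchwartzMap ((Fin N → ℝ) × (Fin N → ℝ)) ℂ)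
    (u : SchwartzMap (Fin N → ℝ) ℂ)
    (ℏ : ℝ) (hℏ : ℏ ≠ 0) :
    ∀ x : Fin N → ℝ,
      OpA ℏ (fun q j => A q j + fderiv ℝ χ q (Pi.single j 1)) (⇑f) (⇑u) x
        = Complex.exp ((Complex.I / (ℏ : ℂ)) * (χ x : ℝ)) *
            OpA ℏ A (⇑f)
              (fun y => Complex.exp (-(Complex.I / (ℏ : ℂ)) * (χ y : ℝ)) * u y) x := by
  intro x
  unfold OpA
  rw [mul_comm (Complex.exp _), mul_assoc]
  congr 1
  rw [← integral_mul_const]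
  refine integral_congr_ae (Filter.Eventually.of_forall fun y => ?_)
  dsimp only
  rw [← integral_mul_const]
  refine integral_congr_ae (Filter.Eventually.of_forall fun k => ?_)
  dsimp only
  rw [circA_gauge A hA χ hχ x y]
  have he : Complex.exp (-(Complex.I / (ℏ : ℂ)) * ((circA A x y + (χ y - χ x) : ℝ) : ℂ))
      = Complex.exp ((Complex.I / (ℏ : ℂ)) * ((χ x : ℝ) : ℂ)) *
        Complex.exp (-(Complex.I / (ℏ : ℂ)) * ((circA A x y : ℝ) : ℂ)) *
        Complex.exp (-(Complex.I / (ℏ : ℂ)) * ((χ y : ℝ) : ℂ)) := by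
    rw [← Complex.exp_add, ← Complex.exp_add]
    congr 1
    push_cast
    ring
  rw [he]
  ring
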